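/- Fix n, r ≥ 0 and let Z, M be the (r+1)2^n × (r+1)2^n matrices indexed by P_{n,r} with entries z_{a,b} = θ_{a,b}(Y_0)·φ_{a,b}(Y_1,…,Y_n) and m_{a,b} = (-1)^{Δ_{n+1}(a,b)} (∏_{i=0}^{n} Y_i^{Δ_i(a,b)}) · θ_{a,b}(Y_0^{-1})·φ_{a,b}(Y_1^{-1},…,Y_n^{-1}), over the field of rational functions in Y_0,…,Y_n. Then M·Z = Z·M = I. -/

import Mathlib

open Finset

attribute [local instance] Classical.propDecidable

def Pmem (n r : ℕ) (a : ℕ → ℕ) : Prop :=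
  a 0 ≤ r ∧ (∀ i, 1 ≤ i → a i ≤ 1) ∧ (∀ i, n < i → a i = 0)

def leT (n : ℕ) (a b : ℕ → ℕ) : Prop :=
  ∀ i ≤ n, ∑ j ∈ Finset.range (i + 1), a j ≤ ∑ j ∈ Finset.range (i + 1), b j

/-- `s_0(a) = binom(a_0, 2)` and `s_i(a) = ∑_{k=0}^{i-1} a_k` for `i ≥ 1`. -/
def sfun (a : ℕ → ℕ) (i : ℕ) : ℤ :=
  if i = 0 then Nat.choose (a 0) 2 else ∑ j ∈ Finset.range i, (a j : ℤ)

/-- `Δ_i(a,b) = s_i(b) - s_i(a)`. -/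
def Δ (a b : ℕ → ℕ) (i : ℕ) : ℤ := sfun b i - sfun a i

/-- The Gaussian (`q`-)binomial coefficient `binom(n,m)_q`; it is `0` when `m > n`. -/
noncomputable def qbinom {F : Type*} [Field F] (q : F) (n m : ℕ) : F :=
  if m ≤ n then ∏ t ∈ Finset.range m, (1 - q ^ (n - m + t + 1)) / (1 - q ^ (t + 1)) else 0

/-- The refined leg polynomial `φ_{a,b}(Y_1,…,Y_n) = ∏_{i ∈ L_{a,b}} (1 - Y_i^{Δ_i(a,b)})`
if `a ≤_t b`, and `0` otherwise, where `L_{a,b} = {i ∈ [n] : a_i = 1, b_i = 0}`. -/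
noncomputable def phi {F : Type*} [Field F] (n : ℕ) (Y : ℕ → F) (a b : ℕ → ℕ) : F :=
  if leT n a b then
    ∏ i ∈ Finset.Icc 1 n, (if a i = 1 ∧ b i = 0 then 1 - (Y i) ^ (Δ a b i) else 1)
  else 0

/-- Encoding of the `(r+1)·2^n` elements of `P_{n,r}` as tuples. -/
def idxTup (n r : ℕ) (p : Fin (r + 1) × (Fin n → Fin 2)) : ℕ → ℕ :=
  fun i => if i = 0 then (p.1 : ℕ)
    else if h : 1 ≤ i ∧ i ≤ n then (p.2 ⟨i - 1, by omega⟩ : ℕ) else 0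

/-- The field `ℚ(Y_0, …, Y_n)` of rational functions. -/
abbrev RF (n : ℕ) := FractionRing (MvPolynomial (Fin (n + 1)) ℚ)

/-- The variables `Y_0, …, Y_n` in `ℚ(Y_0, …, Y_n)`. -/
noncomputable def Yvar (n : ℕ) (i : ℕ) : RF n :=
  if h : i < n + 1 then algebraMap (MvPolynomial (Fin (n + 1)) ℚ) (RF n) (MvPolynomial.X ⟨i, h⟩)
  else 1

/-- The zeta matrix: `z_{a,b} = θ_{a,b}(Y_0) · φ_{a,b}(Y_1,…,Y_n)`. -/
noncomputable def Zmat (n r : ℕ) :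
    Matrix (Fin (r + 1) × (Fin n → Fin 2)) (Fin (r + 1) × (Fin n → Fin 2)) (RF n) :=
  fun p q =>
    qbinom (Yvar n 0) (idxTup n r q 0) (idxTup n r p 0) *
      phi n (Yvar n) (idxTup n r p) (idxTup n r q)

/-- The Möbius matrix:
`m_{a,b} = (-1)^{Δ_{n+1}(a,b)} (∏_{i=0}^{n} Y_i^{Δ_i(a,b)}) θ_{a,b}(Y_0⁻¹) φ_{a,b}(Y⁻¹)`. -/
noncomputable def Mmat (n r : ℕ) :
    Matrix (Fin (r + 1) × (Fin n → Fin 2)) (Fin (r + 1) × (Fin n → Fin 2)) (RF n) :=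
  fun p q =>
    (-1 : RF n) ^ (Δ (idxTup n r p) (idxTup n r q) (n + 1)) *
      (∏ i ∈ Finset.range (n + 1), (Yvar n i) ^ (Δ (idxTup n r p) (idxTup n r q) i)) *
      (qbinom (Yvar n 0)⁻¹ (idxTup n r q 0) (idxTup n r p 0) *
        phi n (fun i => (Yvar n i)⁻¹) (idxTup n r p) (idxTup n r q))


/-!
Appending a coordinate to the tuples multiplies every entry of `Z` and of `M` by a factor that
depends only on the two new bits and on `Δ_{n+1}` of the old tuples. Summing over the new bit of
the middle index, the product of these factors is a `2 × 2` block that depends only on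
`Δ_{n+1}(a, b) + Δ_{n+1}(b, c) = Δ_{n+1}(a, c)`, so it factors out of the sum over the old middle
index; by induction that sum is `δ_{a c}`, and for `a = c` the block is the identity. The case
`n = 0` is Gaussian binomial inversion, which rests on
`∑_k (-1)^k q^{binom(k,2)} binom(m,k)_q = 0` for `m > 0`. The argument works over any field, for
any nonzero `Y_i` with `Y_0` not a root of unity; `Z M = 1` follows as the matrices are square.
-/

lemma add_choose_two (a k : ℕ) : (a + k).choose 2 = a.choose 2 + a * k + k.choose 2 := by
  induction k with
  | zero => simp
  | succ k ih =>
    rw [← Nat.add_assoc, Nat.choose_succ_succ', ih, Nat.choose_succ_succ' k, Nat.choose_one_right,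
      Nat.choose_one_right]
    ring

section GaussianBinomial

variable {F : Type*} [Field F] {q : F}

lemma one_sub_pow_ne_zero (hq : ¬IsOfFinOrder q) {k : ℕ} (hk : k ≠ 0) : 1 - q ^ k ≠ 0 :=
  sub_ne_zero.2 fun h => hq (isOfFinOrder_iff_pow_eq_one.2 ⟨k, Nat.pos_of_ne_zero hk, h.symm⟩)

variable (q) in
noncomputable def qFactorial (m : ℕ) : F := ∏ t ∈ range m, (1 - q ^ (t + 1))

lemma qFactorial_ne_zero (hq : ¬IsOfFinOrder q) (m : ℕ) : qFactorial q m ≠ 0 :=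
  prod_ne_zero_iff.2 fun t _ => one_sub_pow_ne_zero hq t.succ_ne_zero

lemma qFactorial_zero : qFactorial q 0 = 1 :=
  prod_range_zero _

lemma qFactorial_succ (m : ℕ) : qFactorial q (m + 1) = qFactorial q m * (1 - q ^ (m + 1)) :=
  prod_range_succ _ _

lemma qbinom_eq_div (hq : ¬IsOfFinOrder q) {n k : ℕ} (h : k ≤ n) :
    qbinom q n k = qFactorial q n / (qFactorial q k * qFactorial q (n - k)) := by
  obtain ⟨m, rfl⟩ := Nat.exists_eq_add_of_le' h
  have hsplit : qFactorial q (m + k) = qFactorial q m * ∏ t ∈ range k, (1 - q ^ (m + t + 1)) :=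
    prod_range_add _ _ _
  rw [qbinom, if_pos h, prod_div_distrib, Nat.add_sub_cancel, hsplit, ← qFactorial]
  field_simp [qFactorial_ne_zero hq]

lemma qbinom_of_lt {n k : ℕ} (h : n < k) : qbinom q n k = 0 :=
  if_neg h.not_ge

lemma qbinom_zero_right (n : ℕ) : qbinom q n 0 = 1 := by
  simp [qbinom]

lemma qbinom_self (hq : ¬IsOfFinOrder q) (n : ℕ) : qbinom q n n = 1 := by
  rw [qbinom_eq_div hq le_rfl, Nat.sub_self, qFactorial_zero, mul_one,
    div_self (qFactorial_ne_zero hq n)]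

lemma qbinom_succ_succ (hq : ¬IsOfFinOrder q) (n k : ℕ) :
    qbinom q (n + 1) (k + 1) = qbinom q n k + q ^ (k + 1) * qbinom q n (k + 1) := by
  rcases lt_trichotomy n k with h | rfl | h
  · rw [qbinom_of_lt (by omega), qbinom_of_lt h, qbinom_of_lt (by omega)]
    ring
  · rw [qbinom_self hq, qbinom_self hq, qbinom_of_lt (by omega)]
    ring
  obtain ⟨m, rfl⟩ := Nat.exists_eq_add_of_lt h
  rw [qbinom_eq_div hq (by omega), qbinom_eq_div hq (by omega), qbinom_eq_div hq (by omega),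
    show k + m + 1 + 1 - (k + 1) = m + 1 by omega, show k + m + 1 - k = m + 1 by omega,
    show k + m + 1 - (k + 1) = m by omega, qFactorial_succ (k + m + 1), qFactorial_succ k,
    qFactorial_succ m]
  have := one_sub_pow_ne_zero hq (k.succ_ne_zero)
  have := one_sub_pow_ne_zero hq (m.succ_ne_zero)
  field_simp [qFactorial_ne_zero hq]
  ring

lemma sum_range_alternating_qbinom (hq : ¬IsOfFinOrder q) {m : ℕ} (hm : m ≠ 0) :
    ∑ k ∈ range (m + 1), (-1 : F) ^ k * q ^ k.choose 2 * qbinom q m k = 0 := by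
  obtain ⟨m, rfl⟩ := Nat.exists_eq_succ_of_ne_zero hm
  -- Pascal's rule makes the sum telescope.
  set T : ℕ → F := fun k => (-1) ^ k * q ^ (k + 1).choose 2 * qbinom q m k
  have hstep : ∀ k ∈ range (m + 1),
      (-1 : F) ^ (k + 1) * q ^ (k + 1).choose 2 * qbinom q (m + 1) (k + 1) = T (k + 1) - T k := by
    intro k _
    have hchoose : (k + 2).choose 2 = (k + 1).choose 2 + (k + 1) := by
      rw [Nat.choose_succ_succ' (k + 1), Nat.choose_one_right]
      ring
    simp only [T, qbinom_succ_succ hq, hchoose, pow_add]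
    ring
  rw [sum_range_succ', sum_congr rfl hstep, sum_range_sub]
  simp [T, qbinom_zero_right, qbinom_of_lt (Nat.lt_succ_self m)]

lemma not_isOfFinOrder_inv (hq : ¬IsOfFinOrder q) : ¬IsOfFinOrder q⁻¹ := by
  simp only [isOfFinOrder_iff_pow_eq_one, inv_pow, inv_eq_one] at hq ⊢
  exact hq

lemma qbinom_inv_mul_pow (hq0 : q ≠ 0) (hq : ¬IsOfFinOrder q) {n k : ℕ} (h : k ≤ n) :
    qbinom q⁻¹ n k * q ^ (k * (n - k)) = qbinom q n k := by
  obtain ⟨m, rfl⟩ := Nat.exists_eq_add_of_le' h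
  have hpow : q ^ (k * (m + k - k)) = ∏ _t ∈ range k, q ^ m := by
    rw [prod_const, card_range, ← pow_mul, Nat.add_sub_cancel, mul_comm]
  rw [qbinom, qbinom, if_pos h, if_pos h, hpow, ← prod_mul_distrib, Nat.add_sub_cancel]
  refine prod_congr rfl fun t _ => ?_
  have := one_sub_pow_ne_zero hq t.succ_ne_zero
  have := one_sub_pow_ne_zero (not_isOfFinOrder_inv hq) t.succ_ne_zero
  rw [div_mul_eq_mul_div, div_eq_div_iff (by assumption) (by assumption), inv_pow, inv_pow]
  field_simp
  ring

lemma qbinom_mul_qbinom (hq : ¬IsOfFinOrder q) {a b c : ℕ} (hab : a ≤ b) (hbc : b ≤ c) :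
    qbinom q b a * qbinom q c b = qbinom q c a * qbinom q (c - a) (b - a) := by
  rw [qbinom_eq_div hq hab, qbinom_eq_div hq hbc, qbinom_eq_div hq (hab.trans hbc),
    qbinom_eq_div hq (Nat.sub_le_sub_right hbc a), Nat.sub_sub_sub_cancel_right hab]
  field_simp [qFactorial_ne_zero hq]

lemma sum_qbinom_inversion (hq : ¬IsOfFinOrder q) {a c N : ℕ} (hc : c ≤ N) :
    ∑ b ∈ range (N + 1),
        (if a ≤ b then (-1 : F) ^ (b - a) * q ^ (b - a).choose 2 * qbinom q b a else 0) *
          qbinom q c b = if a = c then 1 else 0 := by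
  have hsupp : ∀ b ∈ range (N + 1), b ∉ Ico a (c + 1) →
      (if a ≤ b then (-1 : F) ^ (b - a) * q ^ (b - a).choose 2 * qbinom q b a else 0) *
        qbinom q c b = 0 := by
    intro b _ hb
    rw [mem_Ico, not_and_or, not_le, not_lt] at hb
    rcases hb with hb | hb
    · rw [if_neg hb.not_ge, zero_mul]
    · rw [qbinom_of_lt hb, mul_zero]
  rw [← sum_subset (fun b hb => by simp only [mem_Ico, mem_range] at hb ⊢; omega) hsupp,
    sum_Ico_eq_sum_range]
  rcases lt_trichotomy a c with hac | rfl | hac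
  · have hterm : ∀ k ∈ range (c + 1 - a),
        (if a ≤ a + k then (-1 : F) ^ (a + k - a) * q ^ (a + k - a).choose 2 * qbinom q (a + k) a
          else 0) * qbinom q c (a + k)
        = qbinom q c a * ((-1) ^ k * q ^ k.choose 2 * qbinom q (c - a) k) := by
      intro k hk
      rw [mem_range] at hk
      rw [if_pos (Nat.le_add_right a k), Nat.add_sub_cancel_left, mul_assoc,
        qbinom_mul_qbinom hq (Nat.le_add_right a k) (by omega), Nat.add_sub_cancel_left]
      ring
    rw [sum_congr rfl hterm, ← mul_sum, show c + 1 - a = c - a + 1 by omega,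
      sum_range_alternating_qbinom hq (by omega), mul_zero, if_neg hac.ne]
  · simp [qbinom_self hq]
  · rw [show c + 1 - a = 0 by omega, sum_range_zero, if_neg hac.ne']

end GaussianBinomial

section Tuples

variable {F : Type*} [Field F] {n : ℕ} {a a' b b' : ℕ → ℕ}

lemma Δ_add (a b c : ℕ → ℕ) (i : ℕ) : Δ a b i + Δ b c i = Δ a c i := by
  unfold Δ
  ring

lemma Δ_self (a : ℕ → ℕ) (i : ℕ) : Δ a a i = 0 :=
  sub_self _

lemma Δ_succ (a b : ℕ → ℕ) (n : ℕ) :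
    Δ a b (n + 1) =
      ((∑ j ∈ range (n + 1), b j : ℕ) : ℤ) - ((∑ j ∈ range (n + 1), a j : ℕ) : ℤ) := by
  simp [Δ, sfun]

lemma Δ_succ_succ (a b : ℕ → ℕ) (n : ℕ) :
    Δ a b (n + 2) = Δ a b (n + 1) + ((b (n + 1) : ℤ) - a (n + 1)) := by
  rw [Δ_succ, Δ_succ, sum_range_succ, sum_range_succ a]
  push_cast
  ring

lemma sfun_congr (ha : ∀ j ≤ n, a j = a' j) {i : ℕ} (hi : i ≤ n + 1) :
    sfun a i = sfun a' i := by
  unfold sfun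
  split_ifs
  · rw [ha 0 (Nat.zero_le n)]
  · exact sum_congr rfl fun j hj => by rw [ha j (by rw [mem_range] at hj; omega)]

lemma Δ_congr (ha : ∀ j ≤ n, a j = a' j) (hb : ∀ j ≤ n, b j = b' j) {i : ℕ}
    (hi : i ≤ n + 1) : Δ a b i = Δ a' b' i := by
  rw [Δ, Δ, sfun_congr ha hi, sfun_congr hb hi]

lemma leT_congr (ha : ∀ j ≤ n, a j = a' j) (hb : ∀ j ≤ n, b j = b' j) :
    leT n a b ↔ leT n a' b' := by
  refine forall₂_congr fun i hi => ?_
  rw [sum_congr rfl fun j hj => ha j (by rw [mem_range] at hj; omega),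
    sum_congr rfl fun j hj => hb j (by rw [mem_range] at hj; omega)]

lemma phi_congr (Y : ℕ → F) (ha : ∀ j ≤ n, a j = a' j) (hb : ∀ j ≤ n, b j = b' j) :
    phi n Y a b = phi n Y a' b' := by
  rw [phi, phi, leT_congr ha hb]
  refine if_congr Iff.rfl (prod_congr rfl fun i hi => ?_) rfl
  rw [mem_Icc] at hi
  rw [ha i hi.2, hb i hi.2, Δ_congr ha hb (by omega)]

lemma leT_zero : leT 0 a b ↔ a 0 ≤ b 0 := by
  simp [leT]

lemma leT_succ : leT (n + 1) a b ↔
    leT n a b ∧ ∑ j ∈ range (n + 2), a j ≤ ∑ j ∈ range (n + 2), b j := by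
  simp only [leT, Nat.le_succ_iff, or_imp, forall_and, forall_eq]

noncomputable def legFactor (y : F) (e : ℤ) (α β : ℕ) : F :=
  if α = 1 ∧ β = 0 then 1 - y ^ e else 1

lemma phi_zero (Y : ℕ → F) : phi 0 Y a b = if a 0 ≤ b 0 then 1 else 0 := by
  simp [phi, leT_zero]

lemma phi_succ (Y : ℕ → F) (ha : a (n + 1) ≤ 1) (hb : b (n + 1) ≤ 1) :
    phi (n + 1) Y a b =
      phi n Y a b * legFactor (Y (n + 1)) (Δ a b (n + 1)) (a (n + 1)) (b (n + 1)) := by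
  by_cases hn : leT n a b
  swap
  · rw [phi, phi, if_neg fun h => hn (leT_succ.1 h).1, if_neg hn, zero_mul]
  by_cases htop : ∑ j ∈ range (n + 2), a j ≤ ∑ j ∈ range (n + 2), b j
  · rw [phi, phi, if_pos (leT_succ.2 ⟨hn, htop⟩), if_pos hn, prod_Icc_succ_top (by omega)]
    rfl
  -- The top inequality fails only when `a` gains a unit on `b` at `n + 1` after equal sums,
  -- and then the last factor `1 - Y ^ 0` vanishes.
  rw [phi, if_neg fun h => htop (leT_succ.1 h).2]
  have hle := hn n le_rfl
  rw [sum_range_succ, sum_range_succ b] at htop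
  have hΔ : Δ a b (n + 1) = 0 := by
    rw [Δ_succ]
    omega
  rw [legFactor, if_pos (by omega), hΔ, zpow_zero, sub_self, mul_zero]

end Tuples

section Entries

variable {F : Type*} [Field F] (Y : ℕ → F) {n : ℕ} {a a' b b' : ℕ → ℕ}

noncomputable def zetaEntry (n : ℕ) (a b : ℕ → ℕ) : F :=
  qbinom (Y 0) (b 0) (a 0) * phi n Y a b

noncomputable def mobiusEntry (n : ℕ) (a b : ℕ → ℕ) : F :=
  (-1) ^ Δ a b (n + 1) * (∏ i ∈ range (n + 1), Y i ^ Δ a b i) *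
    (qbinom (Y 0)⁻¹ (b 0) (a 0) * phi n (fun i => (Y i)⁻¹) a b)

lemma zetaEntry_congr (ha : ∀ j ≤ n, a j = a' j) (hb : ∀ j ≤ n, b j = b' j) :
    zetaEntry Y n a b = zetaEntry Y n a' b' := by
  rw [zetaEntry, zetaEntry, ha 0 n.zero_le, hb 0 n.zero_le, phi_congr Y ha hb]

lemma mobiusEntry_congr (ha : ∀ j ≤ n, a j = a' j) (hb : ∀ j ≤ n, b j = b' j) :
    mobiusEntry Y n a b = mobiusEntry Y n a' b' := by
  rw [mobiusEntry, mobiusEntry, ha 0 n.zero_le, hb 0 n.zero_le, phi_congr _ ha hb,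
    Δ_congr ha hb le_rfl,
    prod_congr rfl fun i hi => by rw [Δ_congr ha hb (by rw [mem_range] at hi; omega)]]

lemma zetaEntry_zero : zetaEntry Y 0 a b = qbinom (Y 0) (b 0) (a 0) := by
  rw [zetaEntry, phi_zero]
  split_ifs with h
  · rw [mul_one]
  · rw [mul_zero, qbinom_of_lt (not_le.1 h)]

lemma mobiusEntry_zero (hq0 : Y 0 ≠ 0) (hq : ¬IsOfFinOrder (Y 0)) :
    mobiusEntry Y 0 a b = if a 0 ≤ b 0 then
      (-1) ^ (b 0 - a 0) * Y 0 ^ (b 0 - a 0).choose 2 * qbinom (Y 0) (b 0) (a 0) else 0 := by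
  rw [mobiusEntry, phi_zero]
  split_ifs with h
  swap
  · rw [mul_zero, mul_zero]
  obtain ⟨k, hk⟩ := Nat.exists_eq_add_of_le h
  have hinv := qbinom_inv_mul_pow hq0 hq h
  rw [hk, Nat.add_sub_cancel_left] at hinv ⊢
  have hΔ0 : Δ a b 0 = ((k.choose 2 + a 0 * k : ℕ) : ℤ) := by
    simp only [Δ, sfun, if_true, hk, add_choose_two]
    push_cast
    ring
  have hΔ1 : Δ a b 1 = k := by
    simp [Δ_succ, hk]
  rw [← hinv, prod_range_one, hΔ0, hΔ1, zpow_natCast, zpow_natCast, pow_add]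
  ring

lemma zetaEntry_succ (ha : a (n + 1) ≤ 1) (hb : b (n + 1) ≤ 1) :
    zetaEntry Y (n + 1) a b =
      zetaEntry Y n a b * legFactor (Y (n + 1)) (Δ a b (n + 1)) (a (n + 1)) (b (n + 1)) := by
  rw [zetaEntry, zetaEntry, phi_succ Y ha hb, mul_assoc]

lemma mobiusEntry_succ (ha : a (n + 1) ≤ 1) (hb : b (n + 1) ≤ 1) :
    mobiusEntry Y (n + 1) a b = mobiusEntry Y n a b *
      ((-1) ^ ((b (n + 1) : ℤ) - a (n + 1)) * Y (n + 1) ^ Δ a b (n + 1) *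
        legFactor (Y (n + 1))⁻¹ (Δ a b (n + 1)) (a (n + 1)) (b (n + 1))) := by
  rw [mobiusEntry, mobiusEntry, phi_succ _ ha hb, Δ_succ_succ,
    zpow_add₀ (neg_ne_zero.2 one_ne_zero), prod_range_succ]
  ring

end Entries

lemma sum_legFactor_mul_legFactor {F : Type*} [Field F] {y : F} (hy : y ≠ 0) (e f : ℤ)
    {α γ : ℕ} (hα : α ≤ 1) (hγ : γ ≤ 1) :
    ∑ β ∈ range 2, (-1) ^ ((β : ℤ) - α) * y ^ e * legFactor y⁻¹ e α β * legFactor y f β γ =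
      if α = 1 then (if γ = 1 then 1 else 1 - y ^ (e + f))
      else (if γ = 1 then 0 else y ^ (e + f)) := by
  rw [sum_range_succ, sum_range_one]
  interval_cases α <;> interval_cases γ <;>
    simp only [legFactor, Nat.cast_zero, Nat.cast_one, sub_zero, zero_sub, sub_self, zpow_zero,
      zpow_one, inv_zpow', zpow_neg, zpow_add₀ hy, and_true, and_false, zero_ne_one, one_ne_zero,
      if_true, if_false] <;>
    field_simp <;> ring

section Index

abbrev PIndex (n r : ℕ) := Fin (r + 1) × (Fin n → Fin 2)

def snocIndex (n r : ℕ) : PIndex n r × Fin 2 ≃ PIndex (n + 1) r where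
  toFun x := (x.1.1, Fin.snoc x.1.2 x.2)
  invFun p := ((p.1, Fin.init p.2), p.2 (Fin.last n))
  left_inv := by
    rintro ⟨⟨u, v⟩, β⟩
    simp
  right_inv := by
    rintro ⟨u, v⟩
    simp

variable {n r : ℕ}

@[simp]
lemma idxTup_zero (p : PIndex n r) : idxTup n r p 0 = p.1 :=
  rfl

lemma idxTup_le_one (p : PIndex n r) {i : ℕ} (hi : i ≠ 0) : idxTup n r p i ≤ 1 := by
  unfold idxTup
  split_ifs
  · contradiction
  · exact Fin.is_le _
  · exact zero_le_one

lemma idxTup_snocIndex_of_le (p : PIndex n r) (β : Fin 2) {i : ℕ} (hi : i ≤ n) :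
    idxTup (n + 1) r (snocIndex n r (p, β)) i = idxTup n r p i := by
  rcases Nat.eq_zero_or_pos i with rfl | hpos
  · rfl
  have h : (⟨i - 1, by omega⟩ : Fin (n + 1)) = Fin.castSucc ⟨i - 1, by omega⟩ := rfl
  simp only [idxTup, snocIndex, Equiv.coe_fn_mk, dif_pos (⟨hpos, hi⟩ : 1 ≤ i ∧ i ≤ n),
    dif_pos (⟨hpos, hi.trans n.le_succ⟩ : 1 ≤ i ∧ i ≤ n + 1), h, Fin.snoc_castSucc]

lemma idxTup_snocIndex_self (p : PIndex n r) (β : Fin 2) :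
    idxTup (n + 1) r (snocIndex n r (p, β)) (n + 1) = β := by
  have h : (⟨n + 1 - 1, by omega⟩ : Fin (n + 1)) = Fin.last n := Fin.ext (Nat.add_sub_cancel n 1)
  simp only [idxTup, snocIndex, Equiv.coe_fn_mk, if_neg n.succ_ne_zero,
    dif_pos (⟨Nat.le_add_left 1 n, le_rfl⟩ : 1 ≤ n + 1 ∧ n + 1 ≤ n + 1), h, Fin.snoc_last]

end Index

section Matrices

variable {F : Type*} [Field F] (Y : ℕ → F) {n r : ℕ}

noncomputable def zetaMatrix (n r : ℕ) : Matrix (PIndex n r) (PIndex n r) F :=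
  fun p q => zetaEntry Y n (idxTup n r p) (idxTup n r q)

noncomputable def mobiusMatrix (n r : ℕ) : Matrix (PIndex n r) (PIndex n r) F :=
  fun p q => mobiusEntry Y n (idxTup n r p) (idxTup n r q)

lemma zetaMatrix_snocIndex (p q : PIndex n r) (α β : Fin 2) :
    zetaMatrix Y (n + 1) r (snocIndex n r (p, α)) (snocIndex n r (q, β)) = zetaMatrix Y n r p q *
      legFactor (Y (n + 1)) (Δ (idxTup n r p) (idxTup n r q) (n + 1)) α β := by
  have hp := fun j (hj : j ≤ n) => idxTup_snocIndex_of_le p α hj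
  have hq := fun j (hj : j ≤ n) => idxTup_snocIndex_of_le q β hj
  simp only [zetaMatrix]
  rw [zetaEntry_succ Y (idxTup_le_one _ n.succ_ne_zero) (idxTup_le_one _ n.succ_ne_zero),
    idxTup_snocIndex_self, idxTup_snocIndex_self, Δ_congr hp hq le_rfl, zetaEntry_congr Y hp hq]

lemma mobiusMatrix_snocIndex (p q : PIndex n r) (α β : Fin 2) :
    mobiusMatrix Y (n + 1) r (snocIndex n r (p, α)) (snocIndex n r (q, β)) =
      mobiusMatrix Y n r p q * ((-1) ^ ((β : ℤ) - α) *
        Y (n + 1) ^ Δ (idxTup n r p) (idxTup n r q) (n + 1) *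
        legFactor (Y (n + 1))⁻¹ (Δ (idxTup n r p) (idxTup n r q) (n + 1)) α β) := by
  have hp := fun j (hj : j ≤ n) => idxTup_snocIndex_of_le p α hj
  have hq := fun j (hj : j ≤ n) => idxTup_snocIndex_of_le q β hj
  simp only [mobiusMatrix]
  rw [mobiusEntry_succ Y (idxTup_le_one _ n.succ_ne_zero) (idxTup_le_one _ n.succ_ne_zero),
    idxTup_snocIndex_self, idxTup_snocIndex_self, Δ_congr hp hq le_rfl, mobiusEntry_congr Y hp hq]

lemma mobiusMatrix_mul_zetaMatrix_zero (hY0 : Y 0 ≠ 0) (hq : ¬IsOfFinOrder (Y 0)) :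
    mobiusMatrix Y 0 r * zetaMatrix Y 0 r = 1 := by
  ext a c
  rw [Matrix.mul_apply, Fintype.sum_prod_type]
  simp only [univ_unique, sum_singleton, mobiusMatrix, zetaMatrix, mobiusEntry_zero Y hY0 hq,
    zetaEntry_zero, idxTup_zero]
  refine (Fin.sum_univ_eq_sum_range (fun b => (if (a.1 : ℕ) ≤ b then
      (-1) ^ (b - a.1) * Y 0 ^ (b - a.1).choose 2 * qbinom (Y 0) b a.1 else 0) *
        qbinom (Y 0) c.1 b) (r + 1)).trans ?_
  rw [sum_qbinom_inversion hq c.1.is_le, Matrix.one_apply]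
  exact if_congr ⟨fun h => Prod.ext (Fin.ext h) (Subsingleton.elim _ _),
    fun h => congrArg (fun p : PIndex 0 r => (p.1 : ℕ)) h⟩ rfl rfl

lemma mobiusMatrix_mul_zetaMatrix_succ (hY : Y (n + 1) ≠ 0)
    (ih : mobiusMatrix Y n r * zetaMatrix Y n r = 1) :
    mobiusMatrix Y (n + 1) r * zetaMatrix Y (n + 1) r = 1 := by
  ext A C
  obtain ⟨⟨a, α⟩, rfl⟩ := (snocIndex n r).surjective A
  obtain ⟨⟨c, γ⟩, rfl⟩ := (snocIndex n r).surjective C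
  set D := Δ (idxTup n r a) (idxTup n r c) (n + 1) with hD
  have hfiber : ∀ b : PIndex n r, ∑ β : Fin 2,
      mobiusMatrix Y (n + 1) r (snocIndex n r (a, α)) (snocIndex n r (b, β)) *
        zetaMatrix Y (n + 1) r (snocIndex n r (b, β)) (snocIndex n r (c, γ)) =
      mobiusMatrix Y n r a b * zetaMatrix Y n r b c *
        (if (α : ℕ) = 1 then (if (γ : ℕ) = 1 then 1 else 1 - Y (n + 1) ^ D)
          else (if (γ : ℕ) = 1 then 0 else Y (n + 1) ^ D)) := by
    intro b
    rw [hD, ← Δ_add _ (idxTup n r b), ← sum_legFactor_mul_legFactor hY _ _ α.is_le γ.is_le]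
    simp only [mobiusMatrix_snocIndex, zetaMatrix_snocIndex, Fin.sum_univ_two, sum_range_succ,
      sum_range_zero, zero_add, Fin.val_zero, Fin.val_one, Nat.cast_zero, Nat.cast_one]
    ring
  rw [Matrix.mul_apply, ← (snocIndex n r).sum_comp, Fintype.sum_prod_type,
    sum_congr rfl fun b _ => hfiber b, ← sum_mul, ← Matrix.mul_apply, ih, Matrix.one_apply,
    Matrix.one_apply]
  simp only [(snocIndex n r).injective.eq_iff, Prod.mk.injEq]
  by_cases hac : a = c
  · subst hac
    rw [hD, Δ_self]
    fin_cases α <;> fin_cases γ <;> simp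
  · simp [hac]

end Matrices

theorem mobiusMatrix_mul_zetaMatrix {F : Type*} [Field F] {Y : ℕ → F} (hY : ∀ i, Y i ≠ 0)
    (hq : ¬IsOfFinOrder (Y 0)) (n r : ℕ) : mobiusMatrix Y n r * zetaMatrix Y n r = 1 := by
  induction n with
  | zero => exact mobiusMatrix_mul_zetaMatrix_zero Y (hY 0) hq
  | succ n ih => exact mobiusMatrix_mul_zetaMatrix_succ Y (hY _) ih

lemma Yvar_ne_zero (n i : ℕ) : Yvar n i ≠ 0 := by
  unfold Yvar
  split_ifs
  · exact (IsFractionRing.to_map_ne_zero_of_mem_nonZeroDivisors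
      (mem_nonZeroDivisors_of_ne_zero (MvPolynomial.X_ne_zero _)))
  · exact one_ne_zero

lemma not_isOfFinOrder_Yvar (n : ℕ) {i : ℕ} (hi : i < n + 1) : ¬IsOfFinOrder (Yvar n i) := by
  rw [Yvar, dif_pos hi, isOfFinOrder_iff_pow_eq_one]
  rintro ⟨k, hk, hpow⟩
  rw [← map_pow, ← map_one (algebraMap (MvPolynomial (Fin (n + 1)) ℚ) (RF n))] at hpow
  have := IsFractionRing.injective (MvPolynomial (Fin (n + 1)) ℚ) (RF n) hpow
  rw [MvPolynomial.X_pow_eq_monomial, ← MvPolynomial.C_1, MvPolynomial.C_apply,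
    MvPolynomial.monomial_left_inj one_ne_zero, Finsupp.single_eq_zero] at this
  omega

theorem stmt_14 (n r : ℕ) :
    Mmat n r * Zmat n r = 1 ∧ Zmat n r * Mmat n r = 1 := by
  -- `Mmat n r` and `Zmat n r` are `mobiusMatrix (Yvar n) n r` and `zetaMatrix (Yvar n) n r`
  -- by definition.
  have h : Mmat n r * Zmat n r = 1 :=
    mobiusMatrix_mul_zetaMatrix (Yvar_ne_zero n) (not_isOfFinOrder_Yvar n n.succ_pos) n r
  exact ⟨h, mul_eq_one_comm.1 h⟩
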